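/- Let q, r : ℝ → ℝ be twice differentiable functions satisfying the stationary AKNS equations -(1/2)q''(x) + q(x)²r(x) = 0 and (1/2)r''(x) - q(x)r(x)² = 0 for all x. Then the functions h₀(x) = (1/4)q'(x)r'(x) - (1/4)q(x)²r(x)² and h₁(x) = (1/2)r(x)q'(x) - (1/2)q(x)r'(x) are constant in x. -/

import Mathlib

/-!
Along any curve `(q, r)` the derivatives of `h₀ = ¼ q'r' - ¼ q²r²` and `h₁ = ½ r q' - ½ q r'`
are linear combinations of the two stationary AKNS expressions `½ q'' - q²r` and `½ r'' - qr²`,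
with coefficients `(½ r', ½ q')` and `(r, -q)` respectively; on solutions these vanish, so `h₀`
and `h₁` have zero derivative on `ℝ` and are constant.
-/

section AKNS

variable {q r : ℝ → ℝ} {x : ℝ}

theorem hasDerivAt_akns_h₀
    (hq : DifferentiableAt ℝ q x) (hq' : DifferentiableAt ℝ (deriv q) x)
    (hr : DifferentiableAt ℝ r x) (hr' : DifferentiableAt ℝ (deriv r) x) :
    HasDerivAt (fun z => 1 / 4 * deriv q z * deriv r z - 1 / 4 * q z ^ 2 * r z ^ 2)
      (1 / 2 * deriv r x * (1 / 2 * deriv (deriv q) x - q x ^ 2 * r x)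
        + 1 / 2 * deriv q x * (1 / 2 * deriv (deriv r) x - q x * r x ^ 2)) x := by
  have hprod := hq'.hasDerivAt.fun_mul hr'.hasDerivAt
  have hsq := (hq.hasDerivAt.fun_pow 2).fun_mul (hr.hasDerivAt.fun_pow 2)
  have hfun : (fun z => 1 / 4 * deriv q z * deriv r z - 1 / 4 * q z ^ 2 * r z ^ 2)
      = fun z => 1 / 4 * (deriv q z * deriv r z) - 1 / 4 * (q z ^ 2 * r z ^ 2) := by
    funext z; ring
  rw [hfun]
  exact ((hprod.const_mul (1 / 4)).fun_sub (hsq.const_mul (1 / 4))).congr_deriv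
    (by push_cast; ring)

theorem hasDerivAt_akns_h₁
    (hq : DifferentiableAt ℝ q x) (hq' : DifferentiableAt ℝ (deriv q) x)
    (hr : DifferentiableAt ℝ r x) (hr' : DifferentiableAt ℝ (deriv r) x) :
    HasDerivAt (fun z => 1 / 2 * r z * deriv q z - 1 / 2 * q z * deriv r z)
      (r x * (1 / 2 * deriv (deriv q) x - q x ^ 2 * r x)
        - q x * (1 / 2 * deriv (deriv r) x - q x * r x ^ 2)) x := by
  have hrq := hr.hasDerivAt.fun_mul hq'.hasDerivAt
  have hqr := hq.hasDerivAt.fun_mul hr'.hasDerivAt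
  have hfun : (fun z => 1 / 2 * r z * deriv q z - 1 / 2 * q z * deriv r z)
      = fun z => 1 / 2 * (r z * deriv q z) - 1 / 2 * (q z * deriv r z) := by
    funext z; ring
  rw [hfun]
  exact ((hrq.const_mul (1 / 2)).fun_sub (hqr.const_mul (1 / 2))).congr_deriv (by ring)

end AKNS

theorem eq_of_hasDerivAt_zero {𝕜 G : Type*} [RCLike 𝕜] [NormedAddCommGroup G] [NormedSpace 𝕜 G]
    {f : 𝕜 → G} (hf : ∀ x, HasDerivAt f 0 x) (x y : 𝕜) : f x = f y :=
  is_const_of_deriv_eq_zero (fun z => (hf z).differentiableAt) (fun z => (hf z).deriv) x y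

theorem stationary_n2_integrals (q r : ℝ → ℝ)
    (hq : Differentiable ℝ q) (hq' : Differentiable ℝ (deriv q))
    (hr : Differentiable ℝ r) (hr' : Differentiable ℝ (deriv r))
    (heq1 : ∀ x, -(1 / 2) * deriv (deriv q) x + (q x) ^ 2 * r x = 0)
    (heq2 : ∀ x, 1 / 2 * deriv (deriv r) x - q x * (r x) ^ 2 = 0) :
    (∀ x y : ℝ,
        1 / 4 * deriv q x * deriv r x - 1 / 4 * (q x) ^ 2 * (r x) ^ 2
          = 1 / 4 * deriv q y * deriv r y - 1 / 4 * (q y) ^ 2 * (r y) ^ 2)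
      ∧ (∀ x y : ℝ,
        1 / 2 * r x * deriv q x - 1 / 2 * q x * deriv r x
          = 1 / 2 * r y * deriv q y - 1 / 2 * q y * deriv r y) := by
  have heq1' : ∀ x, 1 / 2 * deriv (deriv q) x - q x ^ 2 * r x = 0 := fun x => by
    linarith [heq1 x]
  constructor
  · refine eq_of_hasDerivAt_zero fun x => ?_
    simpa only [heq1' x, heq2 x, mul_zero, add_zero] using
      hasDerivAt_akns_h₀ (hq x) (hq' x) (hr x) (hr' x)
  · refine eq_of_hasDerivAt_zero fun x => ?_
    simpa only [heq1' x, heq2 x, mul_zero, sub_zero] using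
      hasDerivAt_akns_h₁ (hq x) (hq' x) (hr x) (hr' x)
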